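/- arXiv:2111.15172 — 4 statements merged into one kernel-verified Lean document; each statement's English description precedes it below -/
import Mathlib

section
/- Let G(r_i, r_j) = (μ_i − μ_j)² / (2(σ_i²/r_i + σ_j²/r_j)) and x(r_i, r_j) = ((r_i/σ_i²)μ_i + (r_j/σ_j²)μ_j)/(r_i/σ_i² + r_j/σ_j²), with μ_i ≠ μ_j, σ_i, σ_j > 0, r_i, r_j > 0. Then ∂G/∂r_i (r_i, r_j) = (x(r_i, r_j) − μ_i)²/(2σ_i²) and ∂G/∂r_j (r_i, r_j) = (x(r_i, r_j) − μ_j)²/(2σ_j²); i.e., the partial derivatives of the rate function equal the individual rate functions Λ_i* and Λ_j* evaluated at the minimizing point. -/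
/-!
As a function of `rᵢ` the rate has the form `c / (a / r + b)`, whose derivative is `c a / (a + b r)²`.
The minimiser satisfies `x - μᵢ = (rⱼ/σⱼ²)(μⱼ - μᵢ) / (rᵢ/σᵢ² + rⱼ/σⱼ²)`, and clearing denominators
identifies `(x - μᵢ)² / (2σᵢ²)` with that derivative. The symmetry `i ↔ j` gives the derivative in `rⱼ`.
-/

theorem hasDerivAt_div_div_add {a b c x : ℝ} (hx : x ≠ 0) (hax : a + b * x ≠ 0) :
    HasDerivAt (fun r => c / (a / r + b)) (c * a / (a + b * x) ^ 2) x := by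
  have hden : HasDerivAt (fun r => a / r + b) (-(a / x ^ 2)) x := by
    simpa [div_eq_mul_inv] using ((hasDerivAt_inv hx).const_mul a).add_const b
  have hne : a / x + b ≠ 0 := by
    rwa [div_add' _ _ _ hx, div_ne_zero_iff, and_iff_left hx]
  refine ((hasDerivAt_const x c).fun_div hden hne).congr_deriv ?_
  rw [div_add' _ _ _ hx]
  field_simp
  ring

namespace GaussianRate

noncomputable def rate (μi μj σi σj ri rj : ℝ) : ℝ :=
  (μi - μj) ^ 2 / (2 * (σi ^ 2 / ri + σj ^ 2 / rj))

noncomputable def minimizer (μi μj σi σj ri rj : ℝ) : ℝ :=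
  ((ri / σi ^ 2) * μi + (rj / σj ^ 2) * μj) / (ri / σi ^ 2 + rj / σj ^ 2)

theorem rate_comm (μi μj σi σj ri rj : ℝ) :
    rate μj μi σj σi rj ri = rate μi μj σi σj ri rj := by
  rw [rate, rate, add_comm (σj ^ 2 / rj), ← neg_sub, neg_sq]

theorem minimizer_comm (μi μj σi σj ri rj : ℝ) :
    minimizer μj μi σj σi rj ri = minimizer μi μj σi σj ri rj := by
  rw [minimizer, minimizer, add_comm (rj / σj ^ 2 * μj), add_comm (rj / σj ^ 2)]

variable {μi μj σi σj ri rj : ℝ}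

theorem hasDerivAt_rate_left (hσi : σi ≠ 0) (hσj : σj ≠ 0) (hri : 0 < ri) (hrj : 0 < rj) :
    HasDerivAt (fun r => rate μi μj σi σj r rj)
      ((minimizer μi μj σi σj ri rj - μi) ^ 2 / (2 * σi ^ 2)) ri := by
  have hform : (fun r => rate μi μj σi σj r rj) =
      fun r => (μi - μj) ^ 2 / 2 / (σi ^ 2 / r + σj ^ 2 / rj) := by
    funext r
    rw [rate, div_mul_eq_div_div]
  have hpos : 0 < σi ^ 2 + σj ^ 2 / rj * ri := by positivity
  rw [hform]
  convert hasDerivAt_div_div_add hri.ne' hpos.ne' using 1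
  have hsum : 0 < ri / σi ^ 2 + rj / σj ^ 2 := by positivity
  rw [minimizer]
  field_simp
  ring

theorem hasDerivAt_rate_right (hσi : σi ≠ 0) (hσj : σj ≠ 0) (hri : 0 < ri) (hrj : 0 < rj) :
    HasDerivAt (fun r => rate μi μj σi σj ri r)
      ((minimizer μi μj σi σj ri rj - μj) ^ 2 / (2 * σj ^ 2)) rj := by
  simpa only [rate_comm, minimizer_comm] using
    hasDerivAt_rate_left (μi := μj) (μj := μi) hσj hσi hrj hri

end GaussianRate

open GaussianRate in
theorem stmt_7_general (μi μj σi σj ri rj : ℝ) (hσi : 0 < σi) (hσj : 0 < σj)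
    (hri : 0 < ri) (hrj : 0 < rj) :
    let xstar : ℝ := ((ri / σi ^ 2) * μi + (rj / σj ^ 2) * μj) / (ri / σi ^ 2 + rj / σj ^ 2)
    HasDerivAt (fun r => (μi - μj) ^ 2 / (2 * (σi ^ 2 / r + σj ^ 2 / rj)))
      ((xstar - μi) ^ 2 / (2 * σi ^ 2)) ri ∧
    HasDerivAt (fun r => (μi - μj) ^ 2 / (2 * (σi ^ 2 / ri + σj ^ 2 / r)))
      ((xstar - μj) ^ 2 / (2 * σj ^ 2)) rj :=
  ⟨hasDerivAt_rate_left hσi.ne' hσj.ne' hri hrj, hasDerivAt_rate_right hσi.ne' hσj.ne' hri hrj⟩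

theorem stmt_7 (μi μj σi σj ri rj : ℝ) (hμ : μi ≠ μj) (hσi : 0 < σi) (hσj : 0 < σj)
    (hri : 0 < ri) (hrj : 0 < rj) :
    let xstar : ℝ := ((ri / σi ^ 2) * μi + (rj / σj ^ 2) * μj) / (ri / σi ^ 2 + rj / σj ^ 2)
    HasDerivAt (fun r => (μi - μj) ^ 2 / (2 * (σi ^ 2 / r + σj ^ 2 / rj)))
      ((xstar - μi) ^ 2 / (2 * σi ^ 2)) ri ∧
    HasDerivAt (fun r => (μi - μj) ^ 2 / (2 * (σi ^ 2 / ri + σj ^ 2 / r)))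
      ((xstar - μj) ^ 2 / (2 * σj ^ 2)) rj :=
  stmt_7_general μi μj σi σj ri rj hσi hσj hri hrj
end

section
/- Let μ_i > μ_j, σ_i, σ_j > 0, and r_i, r_j > 0. If X̄_i(T) ~ N(μ_i, σ_i²/(r_i T)) and X̄_j(T) ~ N(μ_j, σ_j²/(r_j T)) are independent for each T, then lim_{T→∞} (1/T) log P(X̄_j(T) ≥ X̄_i(T)) = −(μ_i − μ_j)² / (2(σ_i²/r_i + σ_j²/r_j)). -/
/-!
`X̄_j(T) - X̄_i(T)` is Gaussian with mean `μ_j - μ_i < 0` and variance `w / T`, where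
`w = σ_i²/r_i + σ_j²/r_j`, so the probability in question is the standard normal tail at
`t = (μ_i - μ_j) √(T / w)`. That tail satisfies `log P(Z ≥ t) / t² → -1/2`: from above by the
Chernoff bound `exp (-t²/2)`, from below by the mass `≥ φ(t + 1)` of `[t, t + 1]`.
Since `t² / T = (μ_i - μ_j)² / w`, the rate follows.
-/

open MeasureTheory ProbabilityTheory Real Filter Set Topology
open scoped NNReal

namespace ProbabilityTheory

lemma gaussianReal_real_Ici_le_exp {t : ℝ} (ht : 0 ≤ t) :
    (gaussianReal 0 1).real (Ici t) ≤ exp (-(t ^ 2 / 2)) := by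
  have h := measure_ge_le_exp_mul_mgf (X := id) t ht
    (integrable_exp_mul_gaussianReal (μ := 0) (v := 1) t)
  rw [mgf_id_gaussianReal, ← exp_add] at h
  refine h.trans_eq (congrArg exp ?_)
  push_cast
  ring

lemma exp_le_gaussianReal_real_Ici {t : ℝ} (ht : 0 ≤ t) :
    (√(2 * π))⁻¹ * exp (-((t + 1) ^ 2 / 2)) ≤ (gaussianReal 0 1).real (Ici t) := by
  have hpdf : ∀ x ∈ Icc t (t + 1),
      (√(2 * π))⁻¹ * exp (-((t + 1) ^ 2 / 2)) ≤ gaussianPDFReal 0 1 x := by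
    rintro x ⟨htx, hxt⟩
    simp only [gaussianPDFReal, NNReal.coe_one, mul_one, sub_zero]
    gcongr
    nlinarith
  calc (√(2 * π))⁻¹ * exp (-((t + 1) ^ 2 / 2))
      = ∫ _ in Icc t (t + 1), (√(2 * π))⁻¹ * exp (-((t + 1) ^ 2 / 2)) := by simp
    _ ≤ ∫ x in Icc t (t + 1), gaussianPDFReal 0 1 x :=
        setIntegral_mono_on (integrableOn_const (by simp))
          (integrable_gaussianPDFReal 0 1).integrableOn measurableSet_Icc hpdf
    _ = (gaussianReal 0 1).real (Icc t (t + 1)) := by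
        rw [measureReal_def, gaussianReal_apply_eq_integral _ one_ne_zero, ENNReal.toReal_ofReal
          (setIntegral_nonneg measurableSet_Icc fun x _ => gaussianPDFReal_nonneg 0 1 x)]
    _ ≤ (gaussianReal 0 1).real (Ici t) := measureReal_mono Icc_subset_Ici_self

theorem tendsto_log_gaussianReal_real_Ici_div_sq :
    Tendsto (fun t => log ((gaussianReal 0 1).real (Ici t)) / t ^ 2) atTop (𝓝 (-1 / 2)) := by
  have hlower : Tendsto (fun t : ℝ => -(1 + t⁻¹) ^ 2 / 2 - log (√(2 * π)) * (t ^ 2)⁻¹) atTop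
      (𝓝 (-1 / 2)) := by
    have h := (((tendsto_inv_atTop_zero.const_add 1).pow 2).neg.div_const 2).sub
      ((tendsto_inv_atTop_zero.comp (tendsto_pow_atTop two_ne_zero)).const_mul (log (√(2 * π))))
    simpa using h
  refine tendsto_of_tendsto_of_tendsto_of_le_of_le' hlower tendsto_const_nhds ?_ ?_
  all_goals filter_upwards [eventually_gt_atTop 0] with t ht
  · have hlog_le := log_le_log (by positivity) (exp_le_gaussianReal_real_Ici ht.le)
    rw [log_mul (by positivity) (exp_pos _).ne', log_inv, log_exp] at hlog_le
    rw [le_div_iff₀ (by positivity)]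
    refine le_of_eq_of_le ?_ hlog_le
    field_simp
    ring
  · have hpos : 0 < (gaussianReal 0 1).real (Ici t) :=
      (by positivity : 0 < (√(2 * π))⁻¹ * exp (-((t + 1) ^ 2 / 2))).trans_le
        (exp_le_gaussianReal_real_Ici ht.le)
    rw [div_le_iff₀ (by positivity)]
    calc log ((gaussianReal 0 1).real (Ici t))
        ≤ -(t ^ 2 / 2) := (log_le_iff_le_exp hpos).2 (gaussianReal_real_Ici_le_exp ht.le)
      _ = -1 / 2 * t ^ 2 := by ring

lemma gaussianReal_Ici_eq_gaussianReal_Ici (m x : ℝ) {v : ℝ≥0} (hv : v ≠ 0) :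
    gaussianReal m v (Ici x) = gaussianReal 0 1 (Ici ((x - m) / √v)) := by
  have hsv : 0 < √(v : ℝ) := sqrt_pos.2 (by positivity)
  have hstd : (gaussianReal m v).map (fun y => (y - m) / √v) = gaussianReal 0 1 := by
    rw [show (fun y => (y - m) / √v) = (· / √(v : ℝ)) ∘ (· - m) from rfl,
      ← Measure.map_map (by fun_prop) (by fun_prop), gaussianReal_map_sub_const,
      gaussianReal_map_div_const]
    congr 1
    · simp
    · ext
      simp [sq_sqrt, hv]
  rw [← hstd, Measure.map_apply (by fun_prop) measurableSet_Ici]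
  congr 1
  ext y
  simp [div_le_div_iff_of_pos_right hsv]

theorem tendsto_log_gaussianReal_real_Ici_div {m x : ℝ} (hmx : m < x) {v : ℝ≥0} (hv : v ≠ 0) :
    Tendsto (fun T : ℝ≥0 => (1 / (T : ℝ)) * log ((gaussianReal m (v / T)).real (Ici x))) atTop
      (𝓝 (-((x - m) ^ 2 / (2 * v)))) := by
  have hxm : 0 < x - m := sub_pos.2 hmx
  have hvpos : (0 : ℝ) < v := by positivity
  set s : ℝ≥0 → ℝ := fun T => (x - m) / √v * √T with hs_def
  have hs : Tendsto s atTop atTop :=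
    (tendsto_sqrt_atTop.comp (NNReal.tendsto_coe_atTop.2 tendsto_id)).const_mul_atTop
      (div_pos hxm (sqrt_pos.2 hvpos))
  have h := (tendsto_log_gaussianReal_real_Ici_div_sq.comp hs).mul_const ((x - m) ^ 2 / v)
  rw [show -1 / 2 * ((x - m) ^ 2 / v) = -((x - m) ^ 2 / (2 * v)) by ring] at h
  refine h.congr' ?_
  filter_upwards [eventually_gt_atTop 0] with T hT
  have hTpos : (0 : ℝ) < T := hT
  have hsT : (x - m) / √(↑(v / T) : ℝ) = s T := by
    rw [NNReal.coe_div, sqrt_div' _ hTpos.le, hs_def]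
    field_simp
  have hs2 : s T ^ 2 = (x - m) ^ 2 / v * T := by
    rw [hs_def, mul_pow, div_pow, sq_sqrt hvpos.le, sq_sqrt hTpos.le]
  simp only [Function.comp_apply, measureReal_def]
  rw [gaussianReal_Ici_eq_gaussianReal_Ici m x (div_ne_zero hv hT.ne'), hsT, hs2]
  field_simp

lemma IndepFun.measureReal_le_eq_gaussianReal {Ω : Type*} {mΩ : MeasurableSpace Ω} {P : Measure Ω}
    {X Y : Ω → ℝ} {m₁ m₂ : ℝ} {v₁ v₂ : ℝ≥0} (hXY : IndepFun X Y P)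
    (hX : P.map X = gaussianReal m₁ v₁) (hY : P.map Y = gaussianReal m₂ v₂) :
    P.real {ω | X ω ≤ Y ω} = (gaussianReal (m₂ - m₁) (v₁ + v₂)).real (Ici 0) := by
  have hnegX : HasLaw (-X) (gaussianReal (-m₁) v₁) P :=
    gaussianReal_neg ⟨AEMeasurable.of_map_ne_zero (by simp [hX, NeZero.ne]), hX⟩
  have hYX : IndepFun Y (-X) P := hXY.symm.comp measurable_id measurable_neg
  have hmap := gaussianReal_add_gaussianReal_of_indepFun hYX hY hnegX.map_eq
  have hlaw : HasLaw (Y + -X) (gaussianReal (m₂ - m₁) (v₁ + v₂)) P := by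
    refine ⟨AEMeasurable.of_map_ne_zero (by simp [hmap, NeZero.ne]), ?_⟩
    rw [hmap, ← sub_eq_add_neg, add_comm v₂]
  have hset : {ω | X ω ≤ Y ω} = {ω | 0 ≤ (Y + -X) ω} := by
    ext ω
    simp [← sub_eq_add_neg]
  rw [hset, hlaw.measureReal_eq measurableSet_Ici]
  rfl

end ProbabilityTheory

theorem stmt_12_general {Ω : Type*} [MeasurableSpace Ω] (P : Measure Ω)
    (X Y : ℕ → Ω → ℝ) (μi μj : ℝ) (σi σj ri rj : NNReal)
    (hμ : μj < μi) (hσi : 0 < σi) (hri : 0 < ri)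
    (hX : ∀ T : ℕ, 1 ≤ T → P.map (X T) = gaussianReal μi (σi ^ 2 / (ri * T)))
    (hY : ∀ T : ℕ, 1 ≤ T → P.map (Y T) = gaussianReal μj (σj ^ 2 / (rj * T)))
    (hind : ∀ T : ℕ, IndepFun (X T) (Y T) P) :
    Filter.Tendsto (fun T : ℕ => (1 / (T : ℝ)) * Real.log (P {ω | X T ω ≤ Y T ω}).toReal)
      Filter.atTop
      (nhds (-((μi - μj) ^ 2 /
        (2 * ((σi : ℝ) ^ 2 / (ri : ℝ) + (σj : ℝ) ^ 2 / (rj : ℝ)))))) := by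
  set w : ℝ≥0 := σi ^ 2 / ri + σj ^ 2 / rj with hw_def
  have hw : w ≠ 0 := (add_pos_of_pos_of_nonneg (div_pos (pow_pos hσi 2) hri) zero_le).ne'
  have h := (tendsto_log_gaussianReal_real_Ici_div (sub_neg.2 hμ) hw).comp
    tendsto_natCast_atTop_atTop
  rw [zero_sub, neg_sub, hw_def, NNReal.coe_add, NNReal.coe_div, NNReal.coe_div, NNReal.coe_pow,
    NNReal.coe_pow] at h
  refine h.congr' ?_
  filter_upwards [eventually_ge_atTop 1] with T hT
  rw [Function.comp_apply, NNReal.coe_natCast, ← measureReal_def,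
    (hind T).measureReal_le_eq_gaussianReal (hX T hT) (hY T hT), add_div, div_div, div_div]

theorem stmt_12 {Ω : Type*} [MeasurableSpace Ω] (P : Measure Ω) [IsProbabilityMeasure P]
    (X Y : ℕ → Ω → ℝ) (μi μj : ℝ) (σi σj ri rj : NNReal)
    (hμ : μj < μi) (hσi : 0 < σi) (hσj : 0 < σj) (hri : 0 < ri) (hrj : 0 < rj)
    (hX : ∀ T : ℕ, 1 ≤ T → P.map (X T) = gaussianReal μi (σi ^ 2 / (ri * T)))
    (hY : ∀ T : ℕ, 1 ≤ T → P.map (Y T) = gaussianReal μj (σj ^ 2 / (rj * T)))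
    (hind : ∀ T : ℕ, IndepFun (X T) (Y T) P) :
    Filter.Tendsto (fun T : ℕ => (1 / (T : ℝ)) * Real.log (P {ω | X T ω ≤ Y T ω}).toReal)
      Filter.atTop
      (nhds (-((μi - μj) ^ 2 /
        (2 * ((σi : ℝ) ^ 2 / (ri : ℝ) + (σj : ℝ) ^ 2 / (rj : ℝ)))))) :=
  stmt_12_general P X Y μi μj σi σj ri rj hμ hσi hri hX hY hind
end

section
/- For exponential distributions with rate parameters λ_i, λ_j > 0 with λ_i ≠ λ_j (so means 1/λ_i ≠ 1/λ_j), and sampling ratios r_i, r_j > 0, the infimum over x > 0 of r_i (λ_i x − 1 − log(λ_i x)) + r_j (λ_j x − 1 − log(λ_j x)) is attained at x* = (r_i + r_j)/(r_i λ_i + r_j λ_j) and equals r_i log((r_i λ_i + r_j λ_j)/(λ_i (r_i + r_j))) + r_j log((r_i λ_i + r_j λ_j)/(λ_j (r_i + r_j))). -/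
theorem stmt_16 (li lj ri rj : ℝ) (hli : 0 < li) (hlj : 0 < lj) (hne : li ≠ lj)
    (hri : 0 < ri) (hrj : 0 < rj) :
    let f : ℝ → ℝ := fun x =>
      ri * (li * x - 1 - Real.log (li * x)) + rj * (lj * x - 1 - Real.log (lj * x))
    let xstar : ℝ := (ri + rj) / (ri * li + rj * lj)
    let V : ℝ := ri * Real.log ((ri * li + rj * lj) / (li * (ri + rj))) +
      rj * Real.log ((ri * li + rj * lj) / (lj * (ri + rj)))
    f xstar = V ∧ ∀ x ∈ Set.Ioi (0 : ℝ), f xstar ≤ f x := by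
  intro f xstar V
  have hs : 0 < ri * li + rj * lj := by positivity
  have hS : 0 < ri + rj := by positivity
  have hx : 0 < xstar := div_pos hS hs
  have hxs : xstar * (ri * li + rj * lj) = ri + rj := by
    rw [show xstar = (ri + rj) / (ri * li + rj * lj) from rfl]
    field_simp
  constructor
  · show ri * (li * xstar - 1 - Real.log (li * xstar)) +
      rj * (lj * xstar - 1 - Real.log (lj * xstar)) = V
    have h1 : (ri * li + rj * lj) / (li * (ri + rj)) = (li * xstar)⁻¹ := by
      rw [show xstar = (ri + rj) / (ri * li + rj * lj) from rfl]
      field_simp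
    have h2 : (ri * li + rj * lj) / (lj * (ri + rj)) = (lj * xstar)⁻¹ := by
      rw [show xstar = (ri + rj) / (ri * li + rj * lj) from rfl]
      field_simp
    show _ = ri * Real.log ((ri * li + rj * lj) / (li * (ri + rj))) +
      rj * Real.log ((ri * li + rj * lj) / (lj * (ri + rj)))
    rw [h1, h2, Real.log_inv, Real.log_inv]
    nlinarith [hxs]
  · intro x hx0
    simp only [Set.mem_Ioi] at hx0
    show ri * (li * xstar - 1 - Real.log (li * xstar)) +
      rj * (lj * xstar - 1 - Real.log (lj * xstar)) ≤
      ri * (li * x - 1 - Real.log (li * x)) + rj * (lj * x - 1 - Real.log (lj * x))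
    have hlog : xstar * (Real.log x - Real.log xstar) ≤ x - xstar := by
      have h := Real.log_le_sub_one_of_pos (div_pos hx0 hx)
      rw [Real.log_div hx0.ne' hx.ne'] at h
      have := mul_le_mul_of_nonneg_left h hx.le
      calc xstar * (Real.log x - Real.log xstar) ≤ xstar * (x / xstar - 1) := this
        _ = x - xstar := by field_simp
    rw [Real.log_mul hli.ne' hx0.ne', Real.log_mul hlj.ne' hx0.ne',
        Real.log_mul hli.ne' hx.ne', Real.log_mul hlj.ne' hx.ne']
    nlinarith [mul_le_mul_of_nonneg_left hlog hs.le, hxs]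
end

section
/- For q Bernoulli parameters: let p, q ∈ (0, 1) with p ≠ q and r_i, r_j > 0. Then the infimum over x ∈ (0, 1) of r_i (x log(x/p) + (1−x) log((1−x)/(1−p))) + r_j (x log(x/q) + (1−x) log((1−x)/(1−q))) equals −(r_i + r_j) log[ (1−p)^{r_i/(r_i+r_j)} (1−q)^{r_j/(r_i+r_j)} + p^{r_i/(r_i+r_j)} q^{r_j/(r_i+r_j)} ]. -/
/-!
With `a = rᵢ / (rᵢ + rⱼ)` and `b = rⱼ / (rᵢ + rⱼ)`, the weighted sum `a D(x‖p) + b D(x‖q)` of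
Bernoulli relative entropies equals `D(x‖c) - log Z`, where `Z = pᵃqᵇ + (1-p)ᵃ(1-q)ᵇ` and
`c = pᵃqᵇ / Z` is the parameter of the normalised geometric mixture of the two Bernoulli laws.
Gibbs' inequality `D(x‖c) ≥ 0`, with equality at `x = c`, then shows that the infimum is attained
at `c` and equals `-(rᵢ + rⱼ) log Z`.
-/

open Real Set

noncomputable section

def bernoulliKL (x p : ℝ) : ℝ :=
  x * log (x / p) + (1 - x) * log ((1 - x) / (1 - p))

/-- `Z` and `c` of the normalised geometric mixture `Ber(p)ᵃ Ber(q)ᵇ / Z = Ber(c)`. -/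
def bernoulliGeomNorm (a b p q : ℝ) : ℝ :=
  (1 - p) ^ a * (1 - q) ^ b + p ^ a * q ^ b

def bernoulliGeomMix (a b p q : ℝ) : ℝ :=
  p ^ a * q ^ b / bernoulliGeomNorm a b p q

lemma bernoulliKL_self (p : ℝ) : bernoulliKL p p = 0 := by
  simp [bernoulliKL, Real.log_div_self]

lemma sub_le_mul_log_div {x p : ℝ} (hx : 0 ≤ x) (hp : 0 < p) : x - p ≤ x * log (x / p) := by
  rcases hx.eq_or_lt with rfl | hx
  · simpa using hp.le
  have h := one_sub_inv_le_log_of_pos (div_pos hx hp)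
  calc x - p = x * (1 - (x / p)⁻¹) := by field_simp
    _ ≤ x * log (x / p) := by gcongr

lemma bernoulliKL_nonneg {x p : ℝ} (hx0 : 0 ≤ x) (hx1 : x ≤ 1) (hp0 : 0 < p) (hp1 : p < 1) :
    0 ≤ bernoulliKL x p := by
  have h₀ := sub_le_mul_log_div hx0 hp0
  have h₁ := sub_le_mul_log_div (sub_nonneg.2 hx1) (sub_pos.2 hp1)
  unfold bernoulliKL
  linarith

section GeomMix

variable {a b p q : ℝ}

lemma log_rpow_mul_rpow (hp : 0 < p) (hq : 0 < q) :
    log (p ^ a * q ^ b) = a * log p + b * log q := by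
  rw [log_mul (by positivity) (by positivity), log_rpow hp, log_rpow hq]

variable (a b) (hp0 : 0 < p) (hp1 : p < 1) (hq0 : 0 < q) (hq1 : q < 1)
include hp0 hp1 hq0 hq1

lemma bernoulliGeomNorm_pos : 0 < bernoulliGeomNorm a b p q := by
  have : 0 < 1 - p := sub_pos.2 hp1
  have : 0 < 1 - q := sub_pos.2 hq1
  unfold bernoulliGeomNorm
  positivity

lemma one_sub_bernoulliGeomMix :
    1 - bernoulliGeomMix a b p q = (1 - p) ^ a * (1 - q) ^ b / bernoulliGeomNorm a b p q := by
  have hZ := (bernoulliGeomNorm_pos a b hp0 hp1 hq0 hq1).ne'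
  rw [bernoulliGeomMix, eq_div_iff hZ, sub_mul, div_mul_cancel₀ _ hZ, bernoulliGeomNorm]
  ring

lemma bernoulliGeomMix_mem_Ioo : bernoulliGeomMix a b p q ∈ Ioo 0 1 := by
  have : 0 < 1 - p := sub_pos.2 hp1
  have : 0 < 1 - q := sub_pos.2 hq1
  have hZ := bernoulliGeomNorm_pos a b hp0 hp1 hq0 hq1
  have h1 : 0 < 1 - bernoulliGeomMix a b p q := by
    rw [one_sub_bernoulliGeomMix a b hp0 hp1 hq0 hq1]; positivity
  exact ⟨by unfold bernoulliGeomMix; positivity, by linarith⟩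

lemma add_bernoulliKL_eq_bernoulliKL_geomMix {x : ℝ} (hab : a + b = 1) (hx0 : 0 < x)
    (hx1 : x < 1) :
    a * bernoulliKL x p + b * bernoulliKL x q =
      bernoulliKL x (bernoulliGeomMix a b p q) - log (bernoulliGeomNorm a b p q) := by
  have hp1' : 0 < 1 - p := sub_pos.2 hp1
  have hq1' : 0 < 1 - q := sub_pos.2 hq1
  have hx1' : 0 < 1 - x := sub_pos.2 hx1
  have hZ := bernoulliGeomNorm_pos a b hp0 hp1 hq0 hq1
  obtain ⟨hc0, hc1⟩ := bernoulliGeomMix_mem_Ioo a b hp0 hp1 hq0 hq1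
  have hc1' : 0 < 1 - bernoulliGeomMix a b p q := sub_pos.2 hc1
  have hlogc : log (bernoulliGeomMix a b p q) =
      a * log p + b * log q - log (bernoulliGeomNorm a b p q) := by
    rw [bernoulliGeomMix, log_div (by positivity) hZ.ne', log_rpow_mul_rpow hp0 hq0]
  have hlogc' : log (1 - bernoulliGeomMix a b p q) =
      a * log (1 - p) + b * log (1 - q) - log (bernoulliGeomNorm a b p q) := by
    rw [one_sub_bernoulliGeomMix a b hp0 hp1 hq0 hq1, log_div (by positivity) hZ.ne',
      log_rpow_mul_rpow hp1' hq1']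
  simp only [bernoulliKL]
  rw [log_div hx0.ne' hp0.ne', log_div hx0.ne' hq0.ne', log_div hx0.ne' hc0.ne',
    log_div hx1'.ne' hp1'.ne', log_div hx1'.ne' hq1'.ne', log_div hx1'.ne' hc1'.ne',
    hlogc, hlogc']
  linear_combination (x * log x + (1 - x) * log (1 - x)) * hab

end GeomMix

end

theorem stmt_19_general (p q ri rj : ℝ) (hp : p ∈ Set.Ioo (0 : ℝ) 1) (hq : q ∈ Set.Ioo (0 : ℝ) 1)
    (hri : 0 < ri) (hrj : 0 < rj) :
    IsGLB ((fun x : ℝ =>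
        ri * (x * Real.log (x / p) + (1 - x) * Real.log ((1 - x) / (1 - p))) +
        rj * (x * Real.log (x / q) + (1 - x) * Real.log ((1 - x) / (1 - q)))) ''
        Set.Ioo (0 : ℝ) 1)
      (-(ri + rj) * Real.log
        ((1 - p) ^ (ri / (ri + rj)) * (1 - q) ^ (rj / (ri + rj)) +
          p ^ (ri / (ri + rj)) * q ^ (rj / (ri + rj)))) := by
  obtain ⟨hp0, hp1⟩ := hp
  obtain ⟨hq0, hq1⟩ := hq
  have hs : 0 < ri + rj := add_pos hri hrj
  set a := ri / (ri + rj)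
  set b := rj / (ri + rj)
  have hab : a + b = 1 := by rw [← add_div, div_self hs.ne']
  have hf : ∀ x ∈ Ioo (0 : ℝ) 1, ri * bernoulliKL x p + rj * bernoulliKL x q =
      (ri + rj) * bernoulliKL x (bernoulliGeomMix a b p q) +
        -(ri + rj) * log (bernoulliGeomNorm a b p q) := by
    rintro x ⟨hx0, hx1⟩
    have h := add_bernoulliKL_eq_bernoulliKL_geomMix a b hp0 hp1 hq0 hq1 hab hx0 hx1
    have ha : (ri + rj) * a = ri := mul_div_cancel₀ ri hs.ne'
    have hb : (ri + rj) * b = rj := mul_div_cancel₀ rj hs.ne'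
    linear_combination (ri + rj) * h - bernoulliKL x p * ha - bernoulliKL x q * hb
  have hc := bernoulliGeomMix_mem_Ioo a b hp0 hp1 hq0 hq1
  refine IsLeast.isGLB ⟨⟨_, hc, ?_⟩, ?_⟩
  · show ri * bernoulliKL _ p + rj * bernoulliKL _ q = -(ri + rj) * log (bernoulliGeomNorm a b p q)
    simpa only [bernoulliKL_self, mul_zero, zero_add] using hf _ hc
  · rintro _ ⟨x, hx, rfl⟩
    have hD := mul_nonneg hs.le (bernoulliKL_nonneg hx.1.le hx.2.le hc.1 hc.2)
    show -(ri + rj) * log (bernoulliGeomNorm a b p q) ≤ ri * bernoulliKL x p + rj * bernoulliKL x q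
    linarith [hf x hx]

theorem stmt_19 (p q ri rj : ℝ) (hp : p ∈ Set.Ioo (0 : ℝ) 1) (hq : q ∈ Set.Ioo (0 : ℝ) 1)
    (hpq : p ≠ q) (hri : 0 < ri) (hrj : 0 < rj) :
    IsGLB ((fun x : ℝ =>
        ri * (x * Real.log (x / p) + (1 - x) * Real.log ((1 - x) / (1 - p))) +
        rj * (x * Real.log (x / q) + (1 - x) * Real.log ((1 - x) / (1 - q)))) ''
        Set.Ioo (0 : ℝ) 1)
      (-(ri + rj) * Real.log
        ((1 - p) ^ (ri / (ri + rj)) * (1 - q) ^ (rj / (ri + rj)) +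
          p ^ (ri / (ri + rj)) * q ^ (rj / (ri + rj)))) :=
  stmt_19_general p q ri rj hp hq hri hrj
end
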